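/- Let Ext: {0,1}^{n_1}×{0,1}^{n_2} → {0,1}^d be a (k_1,k_2,ε) quantum-proof two-source extractor in the Markov model, strong in the first input, and let Ext′: {0,1}^{n_1}×{0,1}^{d} → {0,1}^m be a (k_1,ε′) quantum-proof seeded extractor. Define Ext″: {0,1}^{n_1}×{0,1}^{n_2} → {0,1}^m by Ext″(x_1,x_2) := Ext′(x_1, Ext(x_1,x_2)). Then Ext″ is a (k_1,k_2,ε+ε′) quantum-proof two-source extractor in the Markov model; that is, for every Markov state ρ on {0,1}^{n_1}×{0,1}^{n_2} with side information C satisfying H_min(X_1|C)_ρ ≥ k_1 and H_min(X_2|C)_ρ ≥ k_2, one has (1/2)∑_{y∈{0,1}^m} ‖∑_{(x_1,x_2): Ext″(x_1,x_2)=y} ρ(x_1,x_2) − (1/2^m)ρ_C‖₁ ≤ ε + ε′. -/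

import Mathlib

open Kronecker Matrix
open scoped ComplexOrder

/-- Trace norm of a complex matrix: `Tr √(Rᴴ R)`. -/
noncomputable def traceNorm {n : Type*} [Fintype n] [DecidableEq n] (R : Matrix n n ℂ) : ℝ :=
  (((Matrix.posSemidef_conjTranspose_mul_self R).1.eigenvectorUnitary : Matrix n n ℂ) *
    Matrix.diagonal (((↑) : ℝ → ℂ) ∘ (√·) ∘ (Matrix.posSemidef_conjTranspose_mul_self R).1.eigenvalues) *
    (star (Matrix.posSemidef_conjTranspose_mul_self R).1.eigenvectorUnitary : Matrix n n ℂ)).trace.re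

/-- `H_min(S|C)_ρ ≥ k` for a (possibly subnormalized) cq-state `ρ`:
for every POVM `{E s}`, `∑ s Tr(E s ρ s) ≤ 2^(-k)`. -/
def HminGe {S C : Type*} [Fintype S] [Fintype C] [DecidableEq C]
    (ρ : S → Matrix C C ℂ) (k : ℝ) : Prop :=
  ∀ E : S → Matrix C C ℂ, (∀ s, (E s).PosSemidef) → (∑ s, E s) = 1 →
    (∑ s, (E s * ρ s).trace).re ≤ (2:ℝ) ^ (-k)

/-- The ccq Markov state `∑ t p(t) • ρ₁ᵗ(x₁) ⊗ ρ₂ᵗ(x₂) ⊗ |t⟩⟨t|` on `C = C₁ ⊗ C₂ ⊗ ℂ^T`. -/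
noncomputable def markovState {n1 n2 d1 d2 : ℕ} {T : Type*} [Fintype T] [DecidableEq T]
    (p : T → ℝ)
    (ρ1 : T → (Fin n1 → Bool) → Matrix (Fin d1) (Fin d1) ℂ)
    (ρ2 : T → (Fin n2 → Bool) → Matrix (Fin d2) (Fin d2) ℂ)
    (x1 : Fin n1 → Bool) (x2 : Fin n2 → Bool) :
    Matrix (Fin d1 × Fin d2 × T) (Fin d1 × Fin d2 × T) ℂ :=
  ∑ t, p t • (ρ1 t x1 ⊗ₖ (ρ2 t x2 ⊗ₖ Matrix.single t t (1:ℂ)))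

/-- `Ext` is a `(k₁,k₂,ε)` quantum-proof two-source extractor in the Markov model,
strong in `X₁` (with `d` output bits). -/
def QProofMarkovStrong1 (n1 n2 d : ℕ)
    (Ext : (Fin n1 → Bool) → (Fin n2 → Bool) → Fin d → Bool) (k1 k2 ε : ℝ) : Prop :=
  ∀ (d1 d2 : ℕ) (T : Type) [Fintype T] [DecidableEq T] (p : T → ℝ)
    (ρ1 : T → (Fin n1 → Bool) → Matrix (Fin d1) (Fin d1) ℂ)
    (ρ2 : T → (Fin n2 → Bool) → Matrix (Fin d2) (Fin d2) ℂ),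
    (∀ t, 0 ≤ p t) → (∑ t, p t) = 1 →
    (∀ t x1, (ρ1 t x1).PosSemidef) → (∀ t, (∑ x1, (ρ1 t x1).trace) = 1) →
    (∀ t x2, (ρ2 t x2).PosSemidef) → (∀ t, (∑ x2, (ρ2 t x2).trace) = 1) →
    HminGe (fun x1 => ∑ x2, markovState p ρ1 ρ2 x1 x2) k1 →
    HminGe (fun x2 => ∑ x1, markovState p ρ1 ρ2 x1 x2) k2 →
    (1/2) * ∑ y : Fin d → Bool, ∑ x1,
      traceNorm ((∑ x2 ∈ Finset.univ.filter (fun x2 => Ext x1 x2 = y),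
          markovState p ρ1 ρ2 x1 x2)
        - ((2:ℝ)^d)⁻¹ • ∑ x2, markovState p ρ1 ρ2 x1 x2) ≤ ε

/-!
Put `τ(x₁) = ∑_{x₂} ρ(x₁,x₂)` and compare the part `A_y` of `ρ` on which `Ext''` outputs `y`
with the hybrid `B_y = 2^{-d} ∑_{Ext'(x₁,s) = y} τ(x₁)`, in which the output of `Ext` is replaced
by a uniform seed. By the triangle inequality the error of `Ext''` is at most
`∑_y ‖A_y - B_y‖₁ + ∑_y ‖B_y - 2^{-m} ρ_C‖₁`. Grouping `A_y - B_y` by the pair `(x₁, s)` bounds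
the first sum by the strong error of `Ext`; the second sum is the error of `Ext'` on the cq-state
`τ`, which has min-entropy at least `k₁`.

The trace norm triangle inequality for Hermitian matrices comes from `‖C‖₁ = Tr(S C)` for
`S = sign C`, together with `Tr(S A) ≤ ‖A‖₁` whenever `-1 ≤ S ≤ 1`.
-/

open scoped MatrixOrder
open Finset

lemma Matrix.trace_reindex {n m R : Type*} [Fintype n] [Fintype m] [AddCommMonoid R] (e : n ≃ m)
    (M : Matrix n n R) : (reindex e e M).trace = M.trace :=
  e.symm.sum_comp fun i => M i i

section
variable {n : Type*} [Fintype n] [DecidableEq n]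

lemma traceNorm_eq_re_trace_abs (R : Matrix n n ℂ) : traceNorm R = (CFC.abs R).trace.re := by
  have hR := posSemidef_conjTranspose_mul_self R
  rw [CFC.abs, star_eq_conjTranspose, CFC.sqrt_eq_real_sqrt _ hR.nonneg, cfcₙ_eq_cfc, hR.1.cfc_eq]
  rfl

lemma traceNorm_zero : traceNorm (0 : Matrix n n ℂ) = 0 := by
  simp [traceNorm_eq_re_trace_abs]

lemma re_trace_mul_nonneg {X Y : Matrix n n ℂ} (hX : 0 ≤ X) (hY : 0 ≤ Y) :
    0 ≤ (X * Y).trace.re := by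
  have h : (X * Y).trace = (CFC.sqrt X * Y * CFC.sqrt X).trace := by
    rw [Matrix.mul_assoc, trace_mul_comm (CFC.sqrt X), Matrix.mul_assoc, CFC.sqrt_mul_sqrt_self X,
      trace_mul_comm]
  have hpsd : (CFC.sqrt X * Y * CFC.sqrt X).PosSemidef := by
    have := hY.posSemidef.conjTranspose_mul_mul_same (CFC.sqrt X)
    rwa [(CFC.sqrt_nonneg X).posSemidef.1.eq] at this
  rw [h]
  exact (Complex.nonneg_iff.mp hpsd.trace_nonneg).1

lemma re_trace_mul_le_traceNorm {S A : Matrix n n ℂ} (hS₁ : 0 ≤ 1 - S) (hS₂ : 0 ≤ 1 + S)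
    (hA : IsSelfAdjoint A) : (S * A).trace.re ≤ traceNorm A := by
  -- `‖A‖₁ - Tr(S A) = Tr((1 - S) A⁺) + Tr((1 + S) A⁻)`
  have hpos := re_trace_mul_nonneg hS₁ (CFC.posPart_nonneg A)
  have hneg := re_trace_mul_nonneg hS₂ (CFC.negPart_nonneg A)
  rw [traceNorm_eq_re_trace_abs, ← CFC.posPart_add_negPart A]
  nth_rw 1 [← CFC.posPart_sub_negPart A]
  simp only [Matrix.sub_mul, Matrix.add_mul, Matrix.one_mul, Matrix.mul_sub, trace_add, trace_sub,
    Complex.add_re, Complex.sub_re] at *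
  linarith

lemma IsSelfAdjoint.exists_mul_eq_abs {C : Matrix n n ℂ} (hC : IsSelfAdjoint C) :
    ∃ S : Matrix n n ℂ, 0 ≤ 1 - S ∧ 0 ≤ 1 + S ∧ S * C = CFC.abs C := by
  set sign : ℝ → ℝ := fun x => if 0 ≤ x then 1 else -1
  have hsign : ContinuousOn sign (spectrum ℝ C) := C.finite_real_spectrum.continuousOn _
  refine ⟨cfc sign C, sub_nonneg.mpr (cfc_le_one _ _ fun x _ => ?_), ?_, ?_⟩
  · by_cases hx : 0 ≤ x <;> simp [sign, hx]
  · rw [← sub_neg_eq_add, sub_nonneg, ← cfc_neg]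
    refine cfc_le_one _ _ fun x _ => ?_
    by_cases hx : 0 ≤ x <;> simp [sign, hx]
  · nth_rw 2 [← cfc_id' ℝ C]
    rw [← cfc_mul sign _ C, CFC.abs_eq_cfc_norm C]
    refine cfc_congr fun x _ => ?_
    by_cases hx : 0 ≤ x
    · simp [sign, hx, abs_of_nonneg hx]
    · simp [sign, hx, abs_of_neg (not_le.mp hx)]

lemma traceNorm_add_le {A B : Matrix n n ℂ} (hA : IsSelfAdjoint A) (hB : IsSelfAdjoint B) :
    traceNorm (A + B) ≤ traceNorm A + traceNorm B := by
  obtain ⟨S, hS₁, hS₂, hS⟩ := (hA.add hB).exists_mul_eq_abs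
  calc traceNorm (A + B) = (S * A).trace.re + (S * B).trace.re := by
        rw [traceNorm_eq_re_trace_abs, ← hS, Matrix.mul_add, trace_add, Complex.add_re]
    _ ≤ traceNorm A + traceNorm B :=
        add_le_add (re_trace_mul_le_traceNorm hS₁ hS₂ hA) (re_trace_mul_le_traceNorm hS₁ hS₂ hB)

lemma traceNorm_sub_le_traceNorm_sub_add_traceNorm_sub {A B C : Matrix n n ℂ}
    (hA : IsSelfAdjoint A) (hB : IsSelfAdjoint B) (hC : IsSelfAdjoint C) :
    traceNorm (A - C) ≤ traceNorm (A - B) + traceNorm (B - C) := by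
  simpa only [sub_add_sub_cancel] using traceNorm_add_le (hA.sub hB) (hB.sub hC)

lemma traceNorm_sum_le {ι : Type*} (s : Finset ι) (f : ι → Matrix n n ℂ)
    (hf : ∀ i ∈ s, IsSelfAdjoint (f i)) : traceNorm (∑ i ∈ s, f i) ≤ ∑ i ∈ s, traceNorm (f i) := by
  classical
  induction s using Finset.induction_on with
  | empty => simp [traceNorm_zero]
  | insert a s ha ih =>
    rw [sum_insert ha, sum_insert ha]
    have hs : ∀ i ∈ s, IsSelfAdjoint (f i) := fun i hi => hf i (mem_insert_of_mem hi)
    exact (traceNorm_add_le (hf a (mem_insert_self a s)) (isSelfAdjoint_sum s hs)).trans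
      (add_le_add_right (ih hs) _)

variable {m : Type*} [Fintype m] [DecidableEq m]

lemma CFC.abs_reindex (e : n ≃ m) (R : Matrix n n ℂ) :
    CFC.abs (reindex e e R) = reindex e e (CFC.abs R) := by
  have habs : (reindex e e (CFC.abs R)).PosSemidef :=
    (posSemidef_submatrix_equiv e.symm).mpr (CFC.abs_nonneg R).posSemidef
  refine CFC.sqrt_unique ?_ habs.nonneg
  rw [reindex_apply, submatrix_mul_equiv, CFC.abs_mul_abs, star_eq_conjTranspose,
    star_eq_conjTranspose, reindex_apply, conjTranspose_submatrix, submatrix_mul_equiv]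

lemma traceNorm_reindex (e : n ≃ m) (R : Matrix n n ℂ) :
    traceNorm (reindex e e R) = traceNorm R := by
  rw [traceNorm_eq_re_trace_abs, CFC.abs_reindex, trace_reindex, traceNorm_eq_re_trace_abs]

lemma HminGe.reindex {S : Type*} [Fintype S] {ρ : S → Matrix n n ℂ} {k : ℝ} (h : HminGe ρ k)
    (e : n ≃ m) : HminGe (fun s => Matrix.reindex e e (ρ s)) k := by
  intro E hE hsum
  let φ := reindexAlgEquiv ℂ ℂ e
  have hpull : ∀ s, E s * Matrix.reindex e e (ρ s) = φ (φ.symm (E s) * ρ s) := fun s => by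
    rw [map_mul, AlgEquiv.apply_symm_apply]
    rfl
  simp_rw [hpull, φ, coe_reindexAlgEquiv, trace_reindex]
  refine h _ (fun s => (posSemidef_submatrix_equiv e).mpr (hE s)) ?_
  rw [← map_sum φ.symm, hsum, map_one]

end

def QProofSeededOn (n1 d m : ℕ) (Ext' : (Fin n1 → Bool) → (Fin d → Bool) → Fin m → Bool)
    (k ε' : ℝ) (C : Type*) [Fintype C] [DecidableEq C] : Prop :=
  ∀ τ : (Fin n1 → Bool) → Matrix C C ℂ,
    (∀ x, (τ x).PosSemidef) → (∑ x, (τ x).trace) = 1 → HminGe τ k →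
    (1/2) * ∑ y : Fin m → Bool,
      traceNorm (((2:ℝ)^d)⁻¹ • (∑ xs ∈ Finset.univ.filter
          (fun xs : (Fin n1 → Bool) × (Fin d → Bool) => Ext' xs.1 xs.2 = y),
          τ xs.1)
        - ((2:ℝ)^m)⁻¹ • ∑ x, τ x) ≤ ε'

theorem QProofSeededOn.of_equiv {n1 d m : ℕ}
    {Ext' : (Fin n1 → Bool) → (Fin d → Bool) → Fin m → Bool} {k ε' : ℝ}
    {C D : Type*} [Fintype C] [DecidableEq C] [Fintype D] [DecidableEq D] (e : C ≃ D)
    (h : QProofSeededOn n1 d m Ext' k ε' D) : QProofSeededOn n1 d m Ext' k ε' C := by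
  intro τ hτ htr hmin
  have hτ' : ∀ x, (Matrix.reindex e e (τ x)).PosSemidef := fun x =>
    (posSemidef_submatrix_equiv e.symm).mpr (hτ x)
  have htr' : ∑ x, (Matrix.reindex e e (τ x)).trace = 1 := by simpa only [trace_reindex] using htr
  refine le_of_eq_of_le ?_ (h _ hτ' htr' (hmin.reindex e))
  congr 2 with y
  rw [← traceNorm_reindex e]
  simp only [← coe_reindexLinearEquiv ℝ ℂ, map_sub, map_smul, map_sum]

section Markov
variable {n1 n2 d1 d2 : ℕ} {T : Type*} [Fintype T] [DecidableEq T] {p : T → ℝ}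
  {ρ1 : T → (Fin n1 → Bool) → Matrix (Fin d1) (Fin d1) ℂ}
  {ρ2 : T → (Fin n2 → Bool) → Matrix (Fin d2) (Fin d2) ℂ}

lemma markovState_posSemidef (hp : ∀ t, 0 ≤ p t) (h1 : ∀ t x1, (ρ1 t x1).PosSemidef)
    (h2 : ∀ t x2, (ρ2 t x2).PosSemidef) (x1 : Fin n1 → Bool) (x2 : Fin n2 → Bool) :
    (markovState p ρ1 ρ2 x1 x2).PosSemidef := by
  have hsingle : ∀ t : T, (Matrix.single t t (1 : ℂ)).PosSemidef := fun t => by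
    rw [← diagonal_single]
    exact posSemidef_diagonal_iff.mpr fun i => by
      by_cases h : i = t <;> simp [h]
  exact posSemidef_sum _ fun t _ =>
    ((h1 t x1).kronecker ((h2 t x2).kronecker (hsingle t))).smul (hp t)

lemma sum_trace_markovState (hp : ∑ t, p t = 1) (h1 : ∀ t, ∑ x1, (ρ1 t x1).trace = 1)
    (h2 : ∀ t, ∑ x2, (ρ2 t x2).trace = 1) :
    ∑ x1, ∑ x2, (markovState p ρ1 ρ2 x1 x2).trace = 1 := by
  calc ∑ x1, ∑ x2, (markovState p ρ1 ρ2 x1 x2).trace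
      = ∑ t, ∑ x1, ∑ x2, (p t : ℂ) * ((ρ1 t x1).trace * (ρ2 t x2).trace) := by
        simp only [markovState, trace_sum, trace_smul, trace_kronecker, trace_single_eq_same,
          mul_one, Complex.real_smul]
        exact sum_comm_cycle
    _ = ∑ t, (p t : ℂ) := by simp_rw [← mul_sum, h2, mul_one, h1, mul_one]
    _ = 1 := by exact_mod_cast hp

end Markov

section Composition
variable {X₁ X₂ S Y : Type*} [Fintype X₁] [Fintype X₂] [Fintype S] [DecidableEq S] [DecidableEq Y]

lemma sum_filter_comp_eq_sum_fiberwise {M : Type*} [AddCommMonoid M] (F : X₁ → X₂ → M)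
    (f : X₁ → X₂ → S) (g : X₁ → S → Y) (y : Y) :
    ∑ x ∈ univ.filter (fun x : X₁ × X₂ => g x.1 (f x.1 x.2) = y), F x.1 x.2
      = ∑ xs ∈ univ.filter (fun xs : X₁ × S => g xs.1 xs.2 = y),
          ∑ x₂ ∈ univ.filter (fun x₂ => f xs.1 x₂ = xs.2), F xs.1 x₂ := by
  rw [sum_filter, sum_filter, Fintype.sum_prod_type, Fintype.sum_prod_type]
  refine sum_congr rfl fun x₁ _ => ?_
  rw [← sum_fiberwise univ (f x₁)]
  refine sum_congr rfl fun s _ => ?_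
  split_ifs with h
  · exact sum_congr rfl fun x₂ hx₂ => by rw [(mem_filter.mp hx₂).2, if_pos h]
  · exact sum_eq_zero fun x₂ hx₂ => by rw [(mem_filter.mp hx₂).2, if_neg h]

variable [Fintype Y] {n : Type*} [Fintype n] [DecidableEq n]

lemma sum_traceNorm_sum_fiberwise_le {ι : Type*} [Fintype ι] (M : ι → Matrix n n ℂ)
    (hM : ∀ i, IsSelfAdjoint (M i)) (g : ι → Y) :
    ∑ y, traceNorm (∑ i ∈ univ.filter (fun i => g i = y), M i) ≤ ∑ i, traceNorm (M i) :=
  (sum_le_sum fun _ _ => traceNorm_sum_le _ _ fun i _ => hM i).trans (sum_fiberwise univ g _).le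

theorem sum_traceNorm_comp_le (ρ : X₁ → X₂ → Matrix n n ℂ)
    (hρ : ∀ x₁ x₂, IsSelfAdjoint (ρ x₁ x₂)) (f : X₁ → X₂ → S) (g : X₁ → S → Y) (a b : ℝ) :
    ∑ y, traceNorm ((∑ x ∈ univ.filter (fun x : X₁ × X₂ => g x.1 (f x.1 x.2) = y), ρ x.1 x.2)
        - b • ∑ x₁, ∑ x₂, ρ x₁ x₂)
      ≤ ∑ s, ∑ x₁, traceNorm ((∑ x₂ ∈ univ.filter (fun x₂ => f x₁ x₂ = s), ρ x₁ x₂)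
          - a • ∑ x₂, ρ x₁ x₂)
        + ∑ y, traceNorm (a • (∑ xs ∈ univ.filter (fun xs : X₁ × S => g xs.1 xs.2 = y),
            ∑ x₂, ρ xs.1 x₂) - b • ∑ x₁, ∑ x₂, ρ x₁ x₂) := by
  set τ : X₁ → Matrix n n ℂ := fun x₁ => ∑ x₂, ρ x₁ x₂
  set σ : X₁ × S → Matrix n n ℂ :=
    fun xs => ∑ x₂ ∈ univ.filter (fun x₂ => f xs.1 x₂ = xs.2), ρ xs.1 x₂
  set A : Y → Matrix n n ℂ :=
    fun y => ∑ x ∈ univ.filter (fun x : X₁ × X₂ => g x.1 (f x.1 x.2) = y), ρ x.1 x.2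
  set B : Y → Matrix n n ℂ :=
    fun y => a • ∑ xs ∈ univ.filter (fun xs : X₁ × S => g xs.1 xs.2 = y), τ xs.1
  set u : Matrix n n ℂ := b • ∑ x₁, τ x₁
  have hreal : ∀ (c : ℝ) {M : Matrix n n ℂ}, IsSelfAdjoint M → IsSelfAdjoint (c • M) :=
    fun c _ hM => (IsSelfAdjoint.all c).smul hM
  have hτ : ∀ x₁, IsSelfAdjoint (τ x₁) := fun x₁ => isSelfAdjoint_sum _ fun x₂ _ => hρ x₁ x₂
  have hσ : ∀ xs, IsSelfAdjoint (σ xs) := fun xs => isSelfAdjoint_sum _ fun x₂ _ => hρ xs.1 x₂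
  have hA : ∀ y, IsSelfAdjoint (A y) := fun y => isSelfAdjoint_sum _ fun x _ => hρ x.1 x.2
  have hB : ∀ y, IsSelfAdjoint (B y) := fun y => hreal a (isSelfAdjoint_sum _ fun xs _ => hτ xs.1)
  have hu : IsSelfAdjoint u := hreal b (isSelfAdjoint_sum _ fun x₁ _ => hτ x₁)
  have hAB : ∀ y, A y - B y
      = ∑ xs ∈ univ.filter (fun xs : X₁ × S => g xs.1 xs.2 = y), (σ xs - a • τ xs.1) := by
    intro y
    simp only [A, B]
    rw [sum_filter_comp_eq_sum_fiberwise, smul_sum, sum_sub_distrib]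
  calc _ ≤ ∑ y, (traceNorm (A y - B y) + traceNorm (B y - u)) :=
        sum_le_sum fun y _ =>
          traceNorm_sub_le_traceNorm_sub_add_traceNorm_sub (hA y) (hB y) hu
    _ = ∑ y, traceNorm (A y - B y) + ∑ y, traceNorm (B y - u) := sum_add_distrib
    _ ≤ ∑ xs : X₁ × S, traceNorm (σ xs - a • τ xs.1) + ∑ y, traceNorm (B y - u) := by
        gcongr
        simp_rw [hAB]
        exact sum_traceNorm_sum_fiberwise_le _ (fun xs => (hσ xs).sub (hreal a (hτ xs.1))) _
    _ = _ := by rw [Fintype.sum_prod_type, sum_comm]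

end Composition

theorem composition_of_strong_two_source_and_seeded_extractor
    (n1 n2 d m : ℕ)
    (Ext : (Fin n1 → Bool) → (Fin n2 → Bool) → Fin d → Bool)
    (Ext' : (Fin n1 → Bool) → (Fin d → Bool) → Fin m → Bool)
    (k1 k2 ε ε' : ℝ)
    -- `Ext` is a `(k₁,k₂,ε)` quantum-proof two-source extractor in the Markov model,
    -- strong in the first input:
    (hExt : QProofMarkovStrong1 n1 n2 d Ext k1 k2 ε)
    -- `Ext'` is a `(k₁,ε')` quantum-proof seeded extractor:
    (hExt' : ∀ (e : ℕ) (τ : (Fin n1 → Bool) → Matrix (Fin e) (Fin e) ℂ),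
      (∀ x, (τ x).PosSemidef) → (∑ x, (τ x).trace) = 1 →
      HminGe τ k1 →
      (1/2) * ∑ y : Fin m → Bool,
        traceNorm (((2:ℝ)^d)⁻¹ • (∑ xs ∈ Finset.univ.filter
            (fun xs : (Fin n1 → Bool) × (Fin d → Bool) => Ext' xs.1 xs.2 = y),
            τ xs.1)
          - ((2:ℝ)^m)⁻¹ • ∑ x, τ x) ≤ ε') :
    -- then `Ext''(x₁,x₂) := Ext'(x₁, Ext(x₁,x₂))` is a `(k₁,k₂,ε+ε')` quantum-proof
    -- two-source extractor in the Markov model: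
    ∀ (d1 d2 : ℕ) (T : Type) [Fintype T] [DecidableEq T] (p : T → ℝ)
      (ρ1 : T → (Fin n1 → Bool) → Matrix (Fin d1) (Fin d1) ℂ)
      (ρ2 : T → (Fin n2 → Bool) → Matrix (Fin d2) (Fin d2) ℂ),
      (∀ t, 0 ≤ p t) → (∑ t, p t) = 1 →
      (∀ t x1, (ρ1 t x1).PosSemidef) → (∀ t, (∑ x1, (ρ1 t x1).trace) = 1) →
      (∀ t x2, (ρ2 t x2).PosSemidef) → (∀ t, (∑ x2, (ρ2 t x2).trace) = 1) →
      HminGe (fun x1 => ∑ x2, markovState p ρ1 ρ2 x1 x2) k1 →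
      HminGe (fun x2 => ∑ x1, markovState p ρ1 ρ2 x1 x2) k2 →
      (1/2) * ∑ y : Fin m → Bool,
        traceNorm ((∑ x ∈ Finset.univ.filter
            (fun x : (Fin n1 → Bool) × (Fin n2 → Bool) => Ext' x.1 (Ext x.1 x.2) = y),
            markovState p ρ1 ρ2 x.1 x.2)
          - ((2:ℝ)^m)⁻¹ • ∑ x1, ∑ x2, markovState p ρ1 ρ2 x1 x2)
        ≤ ε + ε' := by
  intro d1 d2 T _ _ p ρ1 ρ2 hp hpsum h1psd h1tr h2psd h2tr hH1 hH2
  have hρ := markovState_posSemidef hp h1psd h2psd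
  have hτ : ∀ x1, (∑ x2, markovState p ρ1 ρ2 x1 x2).PosSemidef := fun x1 =>
    posSemidef_sum _ fun x2 _ => hρ x1 x2
  have hseeded := QProofSeededOn.of_equiv (Fintype.equivFin _) (hExt' _) _ hτ
    (by simpa only [trace_sum] using sum_trace_markovState hpsum h1tr h2tr) hH1
  have htwo := hExt d1 d2 T p ρ1 ρ2 hp hpsum h1psd h1tr h2psd h2tr hH1 hH2
  have hcomp := sum_traceNorm_comp_le _ (fun x1 x2 => (hρ x1 x2).isHermitian.isSelfAdjoint)
    Ext Ext' ((2:ℝ)^d)⁻¹ ((2:ℝ)^m)⁻¹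
  linarith
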